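/- Let s ∈ (0,1), l ∈ (−2,4), h ∈ ℝ, and set a = max(0,l), b = min(4, 2+l). Suppose ζ₂, ζ₃ satisfy a < ζ₂ < ζ₃ < b, P(ζ₂) = P(ζ₃) = 0, P(p) > 0 for all p ∈ (ζ₂, ζ₃), P′(ζ₂) ≠ 0, P′(ζ₃) ≠ 0, and (h + (1−2s) − A(ζᵢ))/√(B(ζᵢ)) = −1 for i = 2 and i = 3. Then ∫_{ζ₂}^{ζ₃} arccos((h + (1−2s) − A(p))/√(B(p))) dp = π(ζ₃ − ζ₂) − ∫_{ζ₂}^{ζ₃} R_I(p)/√(P(p)) dp, where the improper integral on the right converges. (This is the integration-by-parts identity expressing the action integral 𝓘(l,h) as an elliptic integral in the case of type III level curves, for which the boundary constant C^B vanishes.) -/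

import Mathlib

/-!
Write `G = h + (1 - 2s) - A`, so that `P = B - G²`, and `W(p) = p · arccos (G / √B)`.
Differentiating, `W' = arccos (G / √B) + p (G B' / 2 - G' B) / (B √P)`, and the rational identity
`p (G B' / 2 - G' B) = R_I · B` turns the second term into `R_I / √P`. Integrating `W'` over
`[ζ₂, ζ₃]` and using `arccos (-1) = π` at both turning points gives the identity. The improper
integral converges because near a simple zero `ζ` of `P` one has `|P(p)| ≥ c |p - ζ|`, so the
integrand is `O(|p - ζ|^(-1/2))`.
-/

open MeasureTheory

/-- `A_s^l(p) = l + 1 − p − 2s − l·s + (3/2)·s·p`. -/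
noncomputable def redA (s l p : ℝ) : ℝ := l + 1 - p - 2 * s - l * s + 3 / 2 * s * p

/-- `B_s^l(p) = s²(1−s)²·p·(p−l)·(p−4)·(p−2−l)`. -/
noncomputable def redB (s l p : ℝ) : ℝ :=
  s ^ 2 * (1 - s) ^ 2 * p * (p - l) * (p - 4) * (p - 2 - l)

/-- `P_{l,h}^s(p) = B_s^l(p) − (h + (1−2s) − A_s^l(p))²`. -/
noncomputable def redP (s l h p : ℝ) : ℝ := redB s l p - (h + (1 - 2 * s) - redA s l p) ^ 2

/-- `h₀ = l(1−s)`. -/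
noncomputable def hZero (s l : ℝ) : ℝ := l * (1 - s)

/-- `h_l = s·l/2`. -/
noncomputable def hL (s l : ℝ) : ℝ := s * l / 2

/-- `h₄ = 6(s−2/3) + l(1−s)`. -/
noncomputable def hFour (s l : ℝ) : ℝ := 6 * (s - 2 / 3) + l * (1 - s)

/-- `h_{2+l} = 3(s−2/3) + s·l/2`. -/
noncomputable def hTwoL (s l : ℝ) : ℝ := 3 * (s - 2 / 3) + s * l / 2

/-- The kernel `R_I(p)` of the elliptic integral expressing the action integral. -/
noncomputable def RI (s l h p : ℝ) : ℝ :=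
  (hZero s l + hL s l - hFour s l - hTwoL s l) / 6 * p +
    (4 * h - hZero s l - hL s l - hFour s l - hTwoL s l) / 2 +
    l / 2 * (h - hL s l) / (p - l) + 2 * (h - hFour s l) / (p - 4) +
    (2 + l) / 2 * (h - hTwoL s l) / (p - 2 - l)

open Set Filter Topology Real

theorem intervalIntegrable_abs_rpow {r : ℝ} (hr : -1 < r) (a b : ℝ) :
    IntervalIntegrable (fun y : ℝ => |y| ^ r) volume a b := by
  have h0 : ∀ c, 0 ≤ c → IntervalIntegrable (fun y : ℝ => |y| ^ r) volume 0 c := by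
    intro c hc
    refine (intervalIntegral.intervalIntegrable_rpow' hr).congr ?_
    intro y hy
    rw [uIoc_of_le hc] at hy
    simp [abs_of_pos hy.1]
  have h : ∀ c, IntervalIntegrable (fun y : ℝ => |y| ^ r) volume 0 c := by
    intro c
    rcases le_total 0 c with hc | hc
    · exact h0 c hc
    · simpa using (IntervalIntegrable.iff_comp_neg (by simp)).1 (h0 (-c) (by linarith))
  exact (h a).symm.trans (h b)

theorem integrableAtFilter_abs_sub_rpow (x : ℝ) {r : ℝ} (hr : -1 < r) :
    IntegrableAtFilter (fun p : ℝ => |p - x| ^ r) (𝓝 x) volume := by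
  refine ⟨Icc (-1 + x) (1 + x), Icc_mem_nhds (by linarith) (by linarith), ?_⟩
  rw [← intervalIntegrable_iff_integrableOn_Icc_of_le (by linarith)]
  exact (intervalIntegrable_abs_rpow hr (-1) 1).comp_sub_right x

theorem HasDerivAt.eventually_mul_abs_sub_le_abs {F : ℝ → ℝ} {x d : ℝ} (hF : HasDerivAt F d x)
    (h0 : F x = 0) (hd : d ≠ 0) : ∀ᶠ p in 𝓝 x, |d| / 2 * |p - x| ≤ |F p| := by
  filter_upwards [(hasDerivAt_iff_isLittleO.1 hF).def (half_pos (abs_pos.2 hd))] with p hp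
  simp only [h0, sub_zero, smul_eq_mul, Real.norm_eq_abs] at hp
  have := abs_sub_abs_le_abs_sub ((p - x) * d) (F p)
  rw [abs_mul, abs_sub_comm ((p - x) * d)] at this
  nlinarith [abs_nonneg (p - x)]

theorem integrableAtFilter_div_sqrt_of_hasDerivAt {F g : ℝ → ℝ} {x d : ℝ} (hg : ContinuousAt g x)
    (hgm : Measurable g) (hFm : Measurable F) (hF : HasDerivAt F d x) (h0 : F x = 0)
    (hd : d ≠ 0) : IntegrableAtFilter (fun p => g p / √(F p)) (𝓝 x) volume := by
  set c := |d| / 2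
  have hc : 0 < c := half_pos (abs_pos.2 hd)
  set M := ‖g x‖ + 1
  obtain ⟨s, hs, hint⟩ := (integrableAtFilter_abs_sub_rpow x (r := -(1 / 2)) (by norm_num)).smul
    (M / √c)
  have hbound : ∀ᶠ p in 𝓝 x, ‖g p / √(F p)‖ ≤ M / √c * |p - x| ^ (-(1 / 2) : ℝ) := by
    filter_upwards [hg.norm.eventually (eventually_lt_nhds (lt_add_one ‖g x‖)),
      hF.eventually_mul_abs_sub_le_abs h0 hd] with p hgp hFp
    rcases le_or_gt (F p) 0 with hFp0 | hFp0
    -- `√` of a negative number is `0`, so the integrand vanishes where `F p ≤ 0`.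
    · rw [sqrt_eq_zero'.2 hFp0, div_zero, norm_zero]
      positivity
    have hpx : 0 < |p - x| := by
      refine abs_pos.2 (sub_ne_zero.2 fun hpx => ?_)
      rw [hpx, h0] at hFp0
      exact lt_irrefl 0 hFp0
    rw [abs_of_pos hFp0] at hFp
    calc ‖g p / √(F p)‖ = ‖g p‖ / √(F p) := by
          rw [norm_div, Real.norm_of_nonneg (sqrt_nonneg _)]
      _ ≤ M / √(c * |p - x|) :=
          div_le_div₀ (by positivity) hgp.le (by positivity) (sqrt_le_sqrt hFp)
      _ = M / √c * |p - x| ^ (-(1 / 2) : ℝ) := by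
          rw [sqrt_mul hc.le, rpow_neg hpx.le, ← sqrt_eq_rpow]
          ring
  obtain ⟨t, ht, htm, hbt⟩ := hbound.exists_measurable_mem
  refine ⟨s ∩ t, inter_mem hs ht, Integrable.mono' (hint.mono_set inter_subset_left)
    (hgm.div hFm.sqrt).aestronglyMeasurable ?_⟩
  exact ae_restrict_of_ae_restrict_of_subset inter_subset_right (ae_restrict_of_forall_mem htm hbt)

theorem intervalIntegrable_div_sqrt_of_simple_zeros {F g : ℝ → ℝ} {a b da db : ℝ} (hab : a ≤ b)
    (hg : ∀ x ∈ Icc a b, ContinuousAt g x) (hgm : Measurable g) (hF : Continuous F)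
    (hFa : HasDerivAt F da a) (hFb : HasDerivAt F db b) (hda : da ≠ 0) (hdb : db ≠ 0)
    (ha : F a = 0) (hb : F b = 0) (hpos : ∀ p ∈ Ioo a b, 0 < F p) :
    IntervalIntegrable (fun p => g p / √(F p)) volume a b := by
  refine IntegrableOn.intervalIntegrable ?_
  rw [uIcc_of_le hab]
  refine LocallyIntegrableOn.integrableOn_isCompact (fun x hx => ?_) isCompact_Icc
  refine IntegrableAtFilter.filter_mono nhdsWithin_le_nhds ?_
  rcases eq_endpoints_or_mem_Ioo_of_mem_Icc hx with rfl | rfl | hx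
  · exact integrableAtFilter_div_sqrt_of_hasDerivAt (hg _ hx) hgm hF.measurable hFa ha hda
  · exact integrableAtFilter_div_sqrt_of_hasDerivAt (hg _ hx) hgm hF.measurable hFb hb hdb
  · have hcont : ContinuousOn (fun p => g p / √(F p)) (Ioo a b) :=
      (continuousOn_of_forall_continuousAt fun p hp => hg p (Ioo_subset_Icc_self hp)).div
        (continuous_sqrt.comp hF).continuousOn fun p hp => (sqrt_pos.2 (hpos p hp)).ne'
    simpa [nhdsWithin_eq_nhds.2 (isOpen_Ioo.mem_nhds hx)] using
      hcont.locallyIntegrableOn measurableSet_Ioo x hx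

theorem hasDerivAt_arccos_div_sqrt {G B : ℝ → ℝ} {G' B' x : ℝ} (hG : HasDerivAt G G' x)
    (hB : HasDerivAt B B' x) (hlt : G x ^ 2 < B x) :
    HasDerivAt (fun y => arccos (G y / √(B y)))
      ((G x * B' / 2 - G' * B x) / (B x * √(B x - G x ^ 2))) x := by
  have hB0 : 0 < B x := (sq_nonneg _).trans_lt hlt
  have hr : 0 < √(B x) := sqrt_pos.2 hB0
  have hr2 : √(B x) ^ 2 = B x := sq_sqrt hB0.le
  have hq : 0 < √(B x - G x ^ 2) := sqrt_pos.2 (sub_pos.2 hlt)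
  have habs : |G x / √(B x)| < 1 := by
    rw [← sq_lt_one_iff_abs_lt_one, div_pow, hr2]
    exact (div_lt_one hB0).2 hlt
  have hsqrt : √(1 - (G x / √(B x)) ^ 2) = √(B x - G x ^ 2) / √(B x) := by
    rw [div_pow, hr2, one_sub_div hB0.ne', sqrt_div' _ hB0.le]
  have := (hasDerivAt_arccos (abs_lt.1 habs).1.ne' (abs_lt.1 habs).2.ne).comp x
    (hG.div (hB.sqrt hB0.ne') hr.ne')
  refine this.congr_deriv ?_
  rw [hsqrt]
  field_simp
  linear_combination -(G x * B') * hr2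

noncomputable def redBDeriv (s l p : ℝ) : ℝ :=
  s ^ 2 * (1 - s) ^ 2 * ((p - l) * (p - 4) * (p - 2 - l) + p * (p - 4) * (p - 2 - l) +
    p * (p - l) * (p - 2 - l) + p * (p - l) * (p - 4))

theorem hasDerivAt_redB (s l p : ℝ) : HasDerivAt (redB s l) (redBDeriv s l p) p := by
  have := ((((hasDerivAt_id p).const_mul (s ^ 2 * (1 - s) ^ 2)).mul
    ((hasDerivAt_id p).sub_const l)).mul ((hasDerivAt_id p).sub_const 4)).mul
    (((hasDerivAt_id p).sub_const 2).sub_const l)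
  exact this.congr_deriv (by simp only [redBDeriv, id, Pi.mul_apply]; ring)

theorem hasDerivAt_sub_redA (s l h p : ℝ) :
    HasDerivAt (fun q => h + (1 - 2 * s) - redA s l q) (1 - 3 / 2 * s) p := by
  have := (((hasDerivAt_id p).const_mul (3 / 2 * s)).sub (hasDerivAt_id p)).const_sub
    (h + (1 - 2 * s) - (l + 1 - 2 * s - l * s))
  exact (this.congr_deriv (by ring)).congr_of_eventuallyEq
    (Eventually.of_forall fun q => by simp only [redA, id, Pi.sub_apply]; ring)

theorem RI_mul_redB (s l h p : ℝ) (hl : p ≠ l) (h4 : p ≠ 4) (h2l : p ≠ 2 + l) :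
    RI s l h p * redB s l p = p * ((h + (1 - 2 * s) - redA s l p) * redBDeriv s l p / 2 -
      (1 - 3 / 2 * s) * redB s l p) := by
  have : p - l ≠ 0 := sub_ne_zero.2 hl
  have : p - 4 ≠ 0 := sub_ne_zero.2 h4
  have : p - 2 - l ≠ 0 := by rw [sub_sub]; exact sub_ne_zero.2 h2l
  unfold RI redA redB redBDeriv hZero hL hFour hTwoL
  field_simp
  ring

theorem redB_pos {s l p : ℝ} (hs : s ∈ Ioo (0 : ℝ) 1) (hp : p ∈ Ioo (max 0 l) (min 4 (2 + l))) :
    0 < redB s l p := by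
  simp only [mem_Ioo, max_lt_iff, lt_min_iff] at hp
  obtain ⟨⟨hp, hl⟩, h4, h2l⟩ := hp
  have : 0 < (p - 4) * (p - 2 - l) := mul_pos_of_neg_of_neg (by linarith) (by linarith)
  have : 0 < s * (1 - s) := mul_pos hs.1 (sub_pos.2 hs.2)
  unfold redB
  nlinarith [mul_pos (mul_pos (pow_pos this 2) hp) (sub_pos.2 hl)]

theorem continuousOn_arccos_div_sqrt_redB (s l h : ℝ) (hs : s ∈ Ioo (0 : ℝ) 1) :
    ContinuousOn (fun p => arccos ((h + (1 - 2 * s) - redA s l p) / √(redB s l p)))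
      (Ioo (max 0 l) (min 4 (2 + l))) :=
  continuous_arccos.comp_continuousOn (ContinuousOn.div (by unfold redA; fun_prop)
    (by unfold redB; fun_prop) fun _ hp => (sqrt_pos.2 (redB_pos hs hp)).ne')

theorem continuousAt_RI (s l h : ℝ) {p : ℝ} (hl : p ≠ l) (h4 : p ≠ 4) (h2l : p ≠ 2 + l) :
    ContinuousAt (RI s l h) p := by
  have : p - l ≠ 0 := sub_ne_zero.2 hl
  have : p - 4 ≠ 0 := sub_ne_zero.2 h4
  have : p - 2 - l ≠ 0 := by rw [sub_sub]; exact sub_ne_zero.2 h2l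
  unfold RI
  fun_prop (disch := assumption)

theorem measurable_RI (s l h : ℝ) : Measurable (RI s l h) := by
  unfold RI
  fun_prop

theorem differentiable_redP (s l h : ℝ) : Differentiable ℝ (redP s l h) := by
  unfold redP redB redA
  fun_prop

theorem hasDerivAt_mul_arccos (s l h : ℝ) {p : ℝ} (hl : p ≠ l) (h4 : p ≠ 4) (h2l : p ≠ 2 + l)
    (hP : 0 < redP s l h p) :
    HasDerivAt (fun q => q * arccos ((h + (1 - 2 * s) - redA s l q) / √(redB s l q)))
      (arccos ((h + (1 - 2 * s) - redA s l p) / √(redB s l p)) + RI s l h p / √(redP s l h p))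
      p := by
  have hlt : (h + (1 - 2 * s) - redA s l p) ^ 2 < redB s l p := sub_pos.1 hP
  have hB : 0 < redB s l p := (sq_nonneg _).trans_lt hlt
  refine ((hasDerivAt_id p).mul (hasDerivAt_arccos_div_sqrt (hasDerivAt_sub_redA s l h p)
    (hasDerivAt_redB s l p) hlt)).congr_deriv ?_
  rw [show redB s l p - (h + (1 - 2 * s) - redA s l p) ^ 2 = redP s l h p from rfl,
    eq_div_of_mul_eq hB.ne' (RI_mul_redB s l h p hl h4 h2l), id, one_mul]
  field_simp

theorem action_integration_by_parts_general (s l h : ℝ) (hs : s ∈ Set.Ioo (0 : ℝ) 1)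
    (ζ₂ ζ₃ : ℝ)
    (ha : max 0 l < ζ₂) (hζ : ζ₂ < ζ₃) (hb : ζ₃ < min 4 (2 + l))
    (h₂ : redP s l h ζ₂ = 0) (h₃ : redP s l h ζ₃ = 0)
    (hpos : ∀ p ∈ Set.Ioo ζ₂ ζ₃, 0 < redP s l h p)
    (hd₂ : deriv (redP s l h) ζ₂ ≠ 0) (hd₃ : deriv (redP s l h) ζ₃ ≠ 0)
    (hb₂ : (h + (1 - 2 * s) - redA s l ζ₂) / Real.sqrt (redB s l ζ₂) = -1)
    (hb₃ : (h + (1 - 2 * s) - redA s l ζ₃) / Real.sqrt (redB s l ζ₃) = -1) :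
    IntervalIntegrable (fun p => RI s l h p / Real.sqrt (redP s l h p)) volume ζ₂ ζ₃ ∧
    ∫ p in ζ₂..ζ₃, Real.arccos ((h + (1 - 2 * s) - redA s l p) / Real.sqrt (redB s l p)) =
      Real.pi * (ζ₃ - ζ₂) - ∫ p in ζ₂..ζ₃, RI s l h p / Real.sqrt (redP s l h p) := by
  have hregion : Icc ζ₂ ζ₃ ⊆ Ioo (max 0 l) (min 4 (2 + l)) := Icc_subset_Ioo ha hb
  have hpoles : ∀ p ∈ Icc ζ₂ ζ₃, p ≠ l ∧ p ≠ 4 ∧ p ≠ 2 + l := fun p hp => by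
    have := hregion hp
    simp only [mem_Ioo, max_lt_iff, lt_min_iff] at this
    exact ⟨this.1.2.ne', this.2.1.ne, this.2.2.ne⟩
  have hP := differentiable_redP s l h
  have hint := intervalIntegrable_div_sqrt_of_simple_zeros hζ.le
    (fun p hp => continuousAt_RI s l h (hpoles p hp).1 (hpoles p hp).2.1 (hpoles p hp).2.2)
    (measurable_RI s l h) hP.continuous (hasDerivAt_deriv_iff.2 (hP ζ₂))
    (hasDerivAt_deriv_iff.2 (hP ζ₃)) hd₂ hd₃ h₂ h₃ hpos
  refine ⟨hint, ?_⟩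
  have harccos := (continuousOn_arccos_div_sqrt_redB s l h hs).mono hregion
  have hW : ∀ p ∈ Ioo ζ₂ ζ₃, HasDerivAt
      (fun q => q * arccos ((h + (1 - 2 * s) - redA s l q) / √(redB s l q)))
      (arccos ((h + (1 - 2 * s) - redA s l p) / √(redB s l p)) + RI s l h p / √(redP s l h p))
      p := fun p hp => by
    obtain ⟨hl, h4, h2l⟩ := hpoles p (Ioo_subset_Icc_self hp)
    exact hasDerivAt_mul_arccos s l h hl h4 h2l (hpos p hp)
  have harccos_int := harccos.intervalIntegrable_of_Icc (μ := volume) hζ.le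
  have hFTC := intervalIntegral.integral_eq_sub_of_hasDerivAt_of_le hζ.le
    (continuousOn_id.mul harccos) hW (harccos_int.add hint)
  rw [intervalIntegral.integral_add harccos_int hint] at hFTC
  simp only [Pi.mul_apply, id_eq, hb₂, hb₃, arccos_neg_one] at hFTC
  linarith

/-- Integration by parts for the action integral in the type III case: with simple turning
points `ζ₂ < ζ₃` inside `(max(0,l), min(4,2+l))` at which the arccos argument equals `−1`,
the elliptic integral `∫ R_I/√P` converges and
`∫_{ζ₂}^{ζ₃} arccos((h + (1−2s) − A(p))/√(B(p))) dp = π(ζ₃ − ζ₂) − ∫_{ζ₂}^{ζ₃} R_I(p)/√(P(p)) dp`. -/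
theorem action_integration_by_parts (s l h : ℝ) (hs : s ∈ Set.Ioo (0 : ℝ) 1)
    (hl : l ∈ Set.Ioo (-2 : ℝ) 4) (ζ₂ ζ₃ : ℝ)
    (ha : max 0 l < ζ₂) (hζ : ζ₂ < ζ₃) (hb : ζ₃ < min 4 (2 + l))
    (h₂ : redP s l h ζ₂ = 0) (h₃ : redP s l h ζ₃ = 0)
    (hpos : ∀ p ∈ Set.Ioo ζ₂ ζ₃, 0 < redP s l h p)
    (hd₂ : deriv (redP s l h) ζ₂ ≠ 0) (hd₃ : deriv (redP s l h) ζ₃ ≠ 0)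
    (hb₂ : (h + (1 - 2 * s) - redA s l ζ₂) / Real.sqrt (redB s l ζ₂) = -1)
    (hb₃ : (h + (1 - 2 * s) - redA s l ζ₃) / Real.sqrt (redB s l ζ₃) = -1) :
    IntervalIntegrable (fun p => RI s l h p / Real.sqrt (redP s l h p)) volume ζ₂ ζ₃ ∧
    ∫ p in ζ₂..ζ₃, Real.arccos ((h + (1 - 2 * s) - redA s l p) / Real.sqrt (redB s l p)) =
      Real.pi * (ζ₃ - ζ₂) - ∫ p in ζ₂..ζ₃, RI s l h p / Real.sqrt (redP s l h p) :=
  action_integration_by_parts_general s l h hs ζ₂ ζ₃ ha hζ hb h₂ h₃ hpos hd₂ hd₃ hb₂ hb₃
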